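/- For any four points in R^d, the inequality Ṽ_2² · Ṽ_3² ≥ 36 V_4² holds, where Ṽ_2² is the sum of the six squared edge lengths, Ṽ_3² is the sum of the squares of the areas of the four faces, and V_4² is the square of the volume of the tetrahedron they span. -/

import Mathlib

/-!
Put `a = r₁ - r₀`, `b = r₂ - r₀`, `c = r₃ - r₀`, so that `36 V₄²` is the Gram determinant
`G(a, b, c)`. Expanding it gives `G(u, v, w) = ‖u‖² G(v, w) - ‖⟪u, w⟫ v - ⟪u, v⟫ w‖²`, hence
`G(u, v, w) ≤ ‖u‖² G(v, w)`: the volume is at most an edge times the area of the face spanned by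
the other two edge vectors at the same vertex. Since Gram determinants are invariant under
permuting the vectors and under moving the base vertex, this bounds `G` by `4 ‖e‖² · area²` for
the four edge–face pairs `(r₀r₁, r₀r₂r₃)`, `(r₀r₂, r₀r₁r₃)`, `(r₀r₃, r₀r₁r₂)`, `(r₀r₁, r₁r₂r₃)`.
Their sum is part of the expansion of `Ṽ₂² Ṽ₃²`, whose remaining terms are nonnegative.
-/

open Matrix

noncomputable section

def areaSq {d : ℕ} (p q s : EuclideanSpace ℝ (Fin d)) : ℝ :=
  (1 / 4) * (‖q - p‖ ^ 2 * ‖s - p‖ ^ 2 - (inner ℝ (q - p) (s - p) : ℝ) ^ 2)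

open scoped RealInnerProductSpace

namespace Matrix

theorem det_gram_comp_perm {E 𝕜 n : Type*} [CommRing 𝕜] [Inner 𝕜 E] [Fintype n]
    [DecidableEq n] (v : n → E) (σ : Equiv.Perm n) : (gram 𝕜 (v ∘ σ)).det = (gram 𝕜 v).det :=
  det_submatrix_equiv_self σ (gram 𝕜 v)

variable {E : Type*} [NormedAddCommGroup E] [InnerProductSpace ℝ E]

theorem det_gram_fin_two (v w : E) :
    (gram ℝ ![v, w]).det = ‖v‖ ^ 2 * ‖w‖ ^ 2 - ⟪v, w⟫ ^ 2 := by
  rw [det_fin_two]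
  simp only [gram_apply, cons_val_zero, cons_val_one, real_inner_self_eq_norm_sq,
    real_inner_comm v w]
  ring

theorem det_gram_fin_three (u v w : E) :
    (gram ℝ ![u, v, w]).det =
      ‖u‖ ^ 2 * (gram ℝ ![v, w]).det - ‖⟪u, w⟫ • v - ⟪u, v⟫ • w‖ ^ 2 := by
  rw [det_fin_three, det_gram_fin_two, norm_sub_sq_real, norm_smul, norm_smul]
  simp only [gram_apply, cons_val_zero, cons_val_one, cons_val_two, Nat.succ_eq_add_one,
    Nat.reduceAdd, tail_cons, head_cons, real_inner_self_eq_norm_sq, real_inner_smul_left,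
    real_inner_smul_right, real_inner_comm u v, real_inner_comm u w, real_inner_comm v w,
    Real.norm_eq_abs, mul_pow, sq_abs]
  ring

theorem det_gram_fin_three_le (u v w : E) :
    (gram ℝ ![u, v, w]).det ≤ ‖u‖ ^ 2 * (gram ℝ ![v, w]).det := by
  rw [det_gram_fin_three]
  exact sub_le_self _ (sq_nonneg _)

theorem det_gram_neg_sub_sub (u v w : E) :
    (gram ℝ ![-u, v - u, w - u]).det = (gram ℝ ![u, v, w]).det := by
  simp only [det_fin_three, gram_apply, cons_val_zero, cons_val_one, cons_val_two,
    Nat.succ_eq_add_one, Nat.reduceAdd, tail_cons, head_cons, inner_neg_left, inner_neg_right,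
    inner_sub_left, inner_sub_right, real_inner_comm u v, real_inner_comm u w,
    real_inner_comm v w]
  ring

end Matrix

theorem sum_sq_norm_sub_zero_le_sum_edges {E : Type*} [SeminormedAddCommGroup E]
    (r : Fin 4 → E) :
    ‖r 1 - r 0‖ ^ 2 + ‖r 2 - r 0‖ ^ 2 + ‖r 3 - r 0‖ ^ 2 ≤
      ∑ i : Fin 4, ∑ j : Fin 4, if i < j then ‖r i - r j‖ ^ 2 else 0 := by
  simp only [Fin.sum_univ_four, Fin.reduceLT, if_true, if_false, lt_self_iff_false,
    norm_sub_rev (r 0)]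
  linarith [sq_nonneg ‖r 1 - r 2‖, sq_nonneg ‖r 1 - r 3‖, sq_nonneg ‖r 2 - r 3‖]

section Tetrahedron

variable {d : ℕ}

theorem areaSq_eq_det_gram (p q s : EuclideanSpace ℝ (Fin d)) :
    areaSq p q s = (gram ℝ ![q - p, s - p]).det / 4 := by
  rw [areaSq, det_gram_fin_two]
  ring

theorem areaSq_nonneg (p q s : EuclideanSpace ℝ (Fin d)) : 0 ≤ areaSq p q s := by
  rw [areaSq_eq_det_gram]
  exact div_nonneg (posSemidef_gram ℝ _).det_nonneg zero_le_four

theorem det_gram_le_four_mul_areaSq (p₀ p₁ p₂ p₃ : EuclideanSpace ℝ (Fin d)) :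
    (gram ℝ ![p₁ - p₀, p₂ - p₀, p₃ - p₀]).det ≤ 4 * ‖p₁ - p₀‖ ^ 2 * areaSq p₀ p₂ p₃ := by
  rw [areaSq_eq_det_gram]
  linarith [det_gram_fin_three_le (p₁ - p₀) (p₂ - p₀) (p₃ - p₀)]

theorem det_gram_le_sum_edge_mul_areaSq (r : Fin 4 → EuclideanSpace ℝ (Fin d)) :
    (gram ℝ ![r 1 - r 0, r 2 - r 0, r 3 - r 0]).det ≤
      ‖r 1 - r 0‖ ^ 2 * (areaSq (r 0) (r 2) (r 3) + areaSq (r 1) (r 2) (r 3)) +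
        ‖r 2 - r 0‖ ^ 2 * areaSq (r 0) (r 1) (r 3) +
        ‖r 3 - r 0‖ ^ 2 * areaSq (r 0) (r 1) (r 2) := by
  have h₁ := det_gram_le_four_mul_areaSq (r 0) (r 1) (r 2) (r 3)
  have h₂ := det_gram_le_four_mul_areaSq (r 0) (r 2) (r 1) (r 3)
  have h₃ := det_gram_le_four_mul_areaSq (r 0) (r 3) (r 1) (r 2)
  have h₄ := det_gram_le_four_mul_areaSq (r 1) (r 0) (r 2) (r 3)
  rw [show ![r 2 - r 0, r 1 - r 0, r 3 - r 0] =
      ![r 1 - r 0, r 2 - r 0, r 3 - r 0] ∘ Equiv.swap 0 1 by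
    funext i; fin_cases i <;> rfl, det_gram_comp_perm] at h₂
  rw [show ![r 3 - r 0, r 1 - r 0, r 2 - r 0] =
      ![r 1 - r 0, r 2 - r 0, r 3 - r 0] ∘ (finRotate 3).symm by
    funext i; fin_cases i <;> rfl, det_gram_comp_perm] at h₃
  rw [show ![r 0 - r 1, r 2 - r 1, r 3 - r 1] =
      ![-(r 1 - r 0), (r 2 - r 0) - (r 1 - r 0), (r 3 - r 0) - (r 1 - r 0)] by
    simp only [neg_sub, sub_sub_sub_cancel_right], det_gram_neg_sub_sub, norm_sub_rev] at h₄
  linarith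

end Tetrahedron

/-- For any four points in `ℝ^d`: `Ṽ₂² · Ṽ₃² ≥ 36 V₄²`, where `Ṽ₂²` is the sum of
the six squared edge lengths, `Ṽ₃²` the sum of the squared areas of the four faces,
and `V₄² = (1/36)·Gram det` the squared volume of the tetrahedron. -/
theorem tetrahedron_inequality {d : ℕ} (r : Fin 4 → EuclideanSpace ℝ (Fin d))
    (V₂sq V₃sq V₄sq : ℝ)
    (hV₂ : V₂sq = ∑ i : Fin 4, ∑ j : Fin 4, if i < j then ‖r i - r j‖ ^ 2 else 0)
    (hV₃ : V₃sq = areaSq (r 0) (r 1) (r 2) + areaSq (r 0) (r 1) (r 3) +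
      areaSq (r 0) (r 2) (r 3) + areaSq (r 1) (r 2) (r 3))
    (hV₄ : V₄sq = (1 / 36) * (Matrix.of fun i j : Fin 3 =>
      (inner ℝ (r i.succ - r 0) (r j.succ - r 0) : ℝ)).det) :
    36 * V₄sq ≤ V₂sq * V₃sq := by
  have hvol : 36 * V₄sq = (gram ℝ ![r 1 - r 0, r 2 - r 0, r 3 - r 0]).det := by
    have : (Matrix.of fun i j : Fin 3 => ⟪r i.succ - r 0, r j.succ - r 0⟫) =
        gram ℝ ![r 1 - r 0, r 2 - r 0, r 3 - r 0] := by
      ext i j; fin_cases i <;> fin_cases j <;> rfl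
    rw [hV₄, this]; ring
  have h012 := areaSq_nonneg (r 0) (r 1) (r 2)
  have h013 := areaSq_nonneg (r 0) (r 1) (r 3)
  have h023 := areaSq_nonneg (r 0) (r 2) (r 3)
  have h123 := areaSq_nonneg (r 1) (r 2) (r 3)
  calc 36 * V₄sq
      ≤ ‖r 1 - r 0‖ ^ 2 * (areaSq (r 0) (r 2) (r 3) + areaSq (r 1) (r 2) (r 3)) +
          ‖r 2 - r 0‖ ^ 2 * areaSq (r 0) (r 1) (r 3) +
          ‖r 3 - r 0‖ ^ 2 * areaSq (r 0) (r 1) (r 2) :=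
        hvol ▸ det_gram_le_sum_edge_mul_areaSq r
    _ ≤ (‖r 1 - r 0‖ ^ 2 + ‖r 2 - r 0‖ ^ 2 + ‖r 3 - r 0‖ ^ 2) * V₃sq := by
      rw [add_mul, add_mul]
      gcongr <;> linarith
    _ ≤ V₂sq * V₃sq := by
      rw [hV₂]
      exact mul_le_mul_of_nonneg_right (sum_sq_norm_sub_zero_le_sum_edges r) (by linarith)

end
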